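/- The alternating minimization step (ALBUM 2, proximal ADM) is a Lagrangian algorithmic map with a = b = μ. Let f₀ : ℝ^n → ℝ and F : ℝ^n → ℝ^m be continuously differentiable, h : ℝ^m → (−∞,+∞] proper lsc, ρ, μ > 0, and fix x̄ ∈ ℝ^n, ū ∈ dom h, y ∈ ℝ^m. Suppose u⁺ is a global minimizer of u ↦ L_ρ(x̄, u, y) and x⁺ is a global minimizer of x ↦ L_ρ(x, u⁺, y) + (μ/2)‖x − x̄‖². Then: (i) (μ/2)‖x⁺ − x̄‖² + L_ρ(x⁺, u⁺, y) ≤ L_ρ(x̄, ū, y); and (ii) ∇f₀(x⁺) + ∇F(x⁺)ᵀ(y + ρ(F(x⁺) − u⁺)) + μ(x⁺ − x̄) = 0, hence ‖∇ₓL_ρ(x⁺, u⁺, y)‖ = μ‖x⁺ − x̄‖. -/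

import Mathlib

open scoped InnerProductSpace

/-- The augmented Lagrangian `L_ρ(x,u,y) = f₀(x) + h(u) + ⟨y, F(x) − u⟩ + (ρ/2)‖F(x) − u‖²`. -/
noncomputable def augLag {n m : ℕ} (f₀ : EuclideanSpace ℝ (Fin n) → ℝ)
    (F : EuclideanSpace ℝ (Fin n) → EuclideanSpace ℝ (Fin m))
    (h : EuclideanSpace ℝ (Fin m) → EReal) (ρ : ℝ)
    (x : EuclideanSpace ℝ (Fin n)) (u y : EuclideanSpace ℝ (Fin m)) : EReal :=
  ((f₀ x + ⟪y, F x - u⟫_ℝ + ρ / 2 * ‖F x - u‖ ^ 2 : ℝ) : EReal) + h u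

/-- `∇ₓL_ρ(x,u,y) = ∇f₀(x) + ∇F(x)ᵀ(y + ρ(F(x) − u))`. -/
noncomputable def gradLagx {n m : ℕ} (f₀ : EuclideanSpace ℝ (Fin n) → ℝ)
    (F : EuclideanSpace ℝ (Fin n) → EuclideanSpace ℝ (Fin m)) (ρ : ℝ)
    (x : EuclideanSpace ℝ (Fin n)) (u y : EuclideanSpace ℝ (Fin m)) :
    EuclideanSpace ℝ (Fin n) :=
  gradient f₀ x + (ContinuousLinearMap.adjoint (fderiv ℝ F x)) (y + ρ • (F x - u))

/-!
Since `u⁺` minimizes `L_ρ(x̄, ·, y)` and `x⁺` minimizes the proximal `x`-subproblem, comparing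
with `x = x̄` and then with `u = ū` gives the sufficient decrease. The value `h(u⁺)` is finite,
so the `x`-subproblem is the minimization of a differentiable real function, and Fermat's rule
says that its gradient `∇ₓL_ρ(x⁺, u⁺, y) + μ (x⁺ − x̄)` vanishes.
-/

section Gradient

variable {E G : Type*} [NormedAddCommGroup E] [InnerProductSpace ℝ E] [CompleteSpace E]
  [NormedAddCommGroup G] [InnerProductSpace ℝ G] [CompleteSpace G]

theorem HasGradientAt.add {f g : E → ℝ} {f' g' x : E} (hf : HasGradientAt f f' x)
    (hg : HasGradientAt g g' x) : HasGradientAt (fun x => f x + g x) (f' + g') x := by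
  rw [hasGradientAt_iff_hasFDerivAt, map_add]
  exact hf.hasFDerivAt.add hg.hasFDerivAt

theorem IsLocalMin.hasGradientAt_eq_zero {f : E → ℝ} {f' x : E} (hmin : IsLocalMin f x)
    (hf : HasGradientAt f f' x) : f' = 0 :=
  (InnerProductSpace.toDual ℝ E).map_eq_zero_iff.mp (hmin.hasFDerivAt_eq_zero hf.hasFDerivAt)

theorem HasFDerivAt.hasGradientAt_adjoint {g : E → ℝ} {A : E →L[ℝ] G} {w : G} {x : E}
    (hg : HasFDerivAt g ((innerSL ℝ w).comp A) x) :
    HasGradientAt g (ContinuousLinearMap.adjoint A w) x :=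
  hg.congr_fderiv <| ContinuousLinearMap.ext fun v => by
    simp [InnerProductSpace.toDual_apply_apply, ContinuousLinearMap.adjoint_inner_left]

theorem hasGradientAt_half_mul_norm_sub_sq (μ : ℝ) (x₀ x : E) :
    HasGradientAt (fun x => μ / 2 * ‖x - x₀‖ ^ 2) (μ • (x - x₀)) x :=
  (((hasFDerivAt_id x).sub_const x₀).norm_sq.const_mul (μ / 2)).congr_fderiv <|
    ContinuousLinearMap.ext fun v => by
      simp only [smul_apply, ContinuousLinearMap.comp_apply, ContinuousLinearMap.id_apply, id_eq,
        coe_innerSL_apply, InnerProductSpace.toDual_apply_apply, inner_smul_left, nsmul_eq_mul,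
        Nat.cast_ofNat, smul_eq_mul, RCLike.conj_to_real]
      ring

theorem hasGradientAt_inner_sub_add_half_mul_norm_sub_sq {F : E → G} {A : E →L[ℝ] G} {x : E}
    (hF : HasFDerivAt F A x) (u y : G) (ρ : ℝ) :
    HasGradientAt (fun x => ⟪y, F x - u⟫_ℝ + ρ / 2 * ‖F x - u‖ ^ 2)
      (ContinuousLinearMap.adjoint A (y + ρ • (F x - u))) x := by
  have hFu : HasFDerivAt (fun x => F x - u) A x := hF.sub_const u
  refine HasFDerivAt.hasGradientAt_adjoint <|
    (((innerSL ℝ y).hasFDerivAt.comp x hFu).add (hFu.norm_sq.const_mul (ρ / 2))).congr_fderiv <|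
      ContinuousLinearMap.ext fun v => ?_
  simp only [add_apply, smul_apply, ContinuousLinearMap.comp_apply, coe_innerSL_apply,
    inner_add_left, inner_smul_left, nsmul_eq_mul, Nat.cast_ofNat, smul_eq_mul,
    RCLike.conj_to_real]
  ring

end Gradient

section AugmentedLagrangian

variable {n m : ℕ} {f₀ : EuclideanSpace ℝ (Fin n) → ℝ}
  {F : EuclideanSpace ℝ (Fin n) → EuclideanSpace ℝ (Fin m)}
  {h : EuclideanSpace ℝ (Fin m) → EReal} {ρ : ℝ} {x : EuclideanSpace ℝ (Fin n)}
  {u y : EuclideanSpace ℝ (Fin m)}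

theorem augLag_ne_top_iff : augLag f₀ F h ρ x u y ≠ ⊤ ↔ h u ≠ ⊤ := by
  refine ⟨fun hL hu => hL ?_, fun hu => (EReal.add_lt_top (EReal.coe_ne_top _) hu).ne⟩
  rw [augLag, hu, EReal.coe_add_top]

theorem augLag_of_eq_coe {r : ℝ} (hu : h u = r) :
    augLag f₀ F h ρ x u y = ((f₀ x + ⟪y, F x - u⟫_ℝ + ρ / 2 * ‖F x - u‖ ^ 2 + r : ℝ) : EReal) := by
  rw [augLag, hu]
  norm_cast

theorem hasGradientAt_gradLagx (hf₀ : DifferentiableAt ℝ f₀ x) (hF : DifferentiableAt ℝ F x) :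
    HasGradientAt (fun x => f₀ x + ⟪y, F x - u⟫_ℝ + ρ / 2 * ‖F x - u‖ ^ 2)
      (gradLagx f₀ F ρ x u y) x := by
  simpa only [add_assoc, gradLagx] using
    hf₀.hasGradientAt.add (hasGradientAt_inner_sub_add_half_mul_norm_sub_sq hF.hasFDerivAt u y ρ)

end AugmentedLagrangian

theorem album2_is_lagrangian_map_general {n m : ℕ}
    (f₀ : EuclideanSpace ℝ (Fin n) → ℝ) (hf₀ : ContDiff ℝ 1 f₀)
    (F : EuclideanSpace ℝ (Fin n) → EuclideanSpace ℝ (Fin m)) (hF : ContDiff ℝ 1 F)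
    (h : EuclideanSpace ℝ (Fin m) → EReal)
    (hnobot : ∀ u, h u ≠ ⊥)
    (ρ μ : ℝ) (hμ : 0 < μ)
    (xbar : EuclideanSpace ℝ (Fin n)) (ubar y : EuclideanSpace ℝ (Fin m))
    (hubar : h ubar ≠ ⊤)
    (xp : EuclideanSpace ℝ (Fin n)) (up : EuclideanSpace ℝ (Fin m))
    (hminu : ∀ u' : EuclideanSpace ℝ (Fin m),
      augLag f₀ F h ρ xbar up y ≤ augLag f₀ F h ρ xbar u' y)
    (hminx : ∀ x' : EuclideanSpace ℝ (Fin n),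
      augLag f₀ F h ρ xp up y + ((μ / 2 * ‖xp - xbar‖ ^ 2 : ℝ) : EReal)
        ≤ augLag f₀ F h ρ x' up y + ((μ / 2 * ‖x' - xbar‖ ^ 2 : ℝ) : EReal)) :
    (((μ / 2 * ‖xp - xbar‖ ^ 2 : ℝ) : EReal) + augLag f₀ F h ρ xp up y
        ≤ augLag f₀ F h ρ xbar ubar y) ∧
    gradLagx f₀ F ρ xp up y + μ • (xp - xbar) = 0 ∧
    ‖gradLagx f₀ F ρ xp up y‖ = μ * ‖xp - xbar‖ := by
  have hdecrease : ((μ / 2 * ‖xp - xbar‖ ^ 2 : ℝ) : EReal) + augLag f₀ F h ρ xp up y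
      ≤ augLag f₀ F h ρ xbar ubar y := by
    have hx := hminx xbar
    rw [sub_self, norm_zero, zero_pow two_ne_zero, mul_zero, EReal.coe_zero, add_zero] at hx
    rw [add_comm]
    exact hx.trans (hminu ubar)
  have hup : h up ≠ ⊤ := augLag_ne_top_iff.mp <|
    ne_top_of_le_ne_top (augLag_ne_top_iff.mpr hubar) (hminu ubar)
  have hr := (EReal.coe_toReal hup (hnobot up)).symm
  have hmin : IsLocalMin (fun x => f₀ x + ⟪y, F x - up⟫_ℝ + ρ / 2 * ‖F x - up‖ ^ 2
      + μ / 2 * ‖x - xbar‖ ^ 2) xp := Filter.Eventually.of_forall fun x' => by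
    have hx := hminx x'
    rw [augLag_of_eq_coe hr, augLag_of_eq_coe hr] at hx
    norm_cast at hx
    linarith
  have hstat : gradLagx f₀ F ρ xp up y + μ • (xp - xbar) = 0 :=
    hmin.hasGradientAt_eq_zero <|
      (hasGradientAt_gradLagx (hf₀.differentiable one_ne_zero xp)
        (hF.differentiable one_ne_zero xp)).add (hasGradientAt_half_mul_norm_sub_sq μ xbar xp)
  refine ⟨hdecrease, hstat, ?_⟩
  rw [eq_neg_of_add_eq_zero_left hstat, norm_neg, norm_smul, Real.norm_of_nonneg hμ.le]

/-- **ALBUM 2 (proximal ADM) is a Lagrangian algorithmic map with `a = b = μ`** : if `u⁺`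
minimizes `u ↦ L_ρ(x̄,u,y)` and `x⁺` minimizes `x ↦ L_ρ(x,u⁺,y) + (μ/2)‖x − x̄‖²`, then the
sufficient decrease property and `‖∇ₓL_ρ(x⁺,u⁺,y)‖ = μ‖x⁺ − x̄‖` hold. -/
theorem album2_is_lagrangian_map {n m : ℕ}
    (f₀ : EuclideanSpace ℝ (Fin n) → ℝ) (hf₀ : ContDiff ℝ 1 f₀)
    (F : EuclideanSpace ℝ (Fin n) → EuclideanSpace ℝ (Fin m)) (hF : ContDiff ℝ 1 F)
    (h : EuclideanSpace ℝ (Fin m) → EReal)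
    (hproper : ∃ u, h u ≠ ⊤) (hnobot : ∀ u, h u ≠ ⊥) (hlsc : LowerSemicontinuous h)
    (ρ μ : ℝ) (hρ : 0 < ρ) (hμ : 0 < μ)
    (xbar : EuclideanSpace ℝ (Fin n)) (ubar y : EuclideanSpace ℝ (Fin m))
    (hubar : h ubar ≠ ⊤)
    (xp : EuclideanSpace ℝ (Fin n)) (up : EuclideanSpace ℝ (Fin m))
    (hminu : ∀ u' : EuclideanSpace ℝ (Fin m),
      augLag f₀ F h ρ xbar up y ≤ augLag f₀ F h ρ xbar u' y)
    (hminx : ∀ x' : EuclideanSpace ℝ (Fin n),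
      augLag f₀ F h ρ xp up y + ((μ / 2 * ‖xp - xbar‖ ^ 2 : ℝ) : EReal)
        ≤ augLag f₀ F h ρ x' up y + ((μ / 2 * ‖x' - xbar‖ ^ 2 : ℝ) : EReal)) :
    (((μ / 2 * ‖xp - xbar‖ ^ 2 : ℝ) : EReal) + augLag f₀ F h ρ xp up y
        ≤ augLag f₀ F h ρ xbar ubar y) ∧
    gradLagx f₀ F ρ xp up y + μ • (xp - xbar) = 0 ∧
    ‖gradLagx f₀ F ρ xp up y‖ = μ * ‖xp - xbar‖ :=
  album2_is_lagrangian_map_general f₀ hf₀ F hF h hnobot ρ μ hμ xbar ubar y hubar xp up hminu hminx
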